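/- Let X be an infinite-dimensional Banach space with Kottman constant κ = κ(X), let α ∈ (0,1] and ε′ > 0. Then there is no sequence (x′ₙ) in the closed unit ball of X satisfying κ^α ‖x′_k‖^α + ε′ < ‖x′_j − x′_k‖^α for all j < k. -/

import Mathlib

open Set Filter
open scoped ENNReal NNReal

noncomputable section

/-- The Kottman constant of a normed space: the supremum of separation constants
`sep (xₙ) = inf_{n ≠ m} ‖xₙ - xₘ‖` over sequences `(xₙ)` in the closed unit ball. -/
def kottman (X : Type*) [SeminormedAddGroup X] : ℝ :=
  sSup {r : ℝ | ∃ x : ℕ → X, (∀ n, ‖x n‖ ≤ 1) ∧ ∀ n m, n ≠ m → r ≤ ‖x n - x m‖}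

/-- `f` is α-Hölder with constant `K` on the set `M` (real exponent, via `Real.rpow`). -/
def HolderOnR {X Y : Type*} [SeminormedAddGroup X] [SeminormedAddGroup Y]
    (K α : ℝ) (f : X → Y) (M : Set X) : Prop :=
  ∀ x ∈ M, ∀ y ∈ M, ‖f x - f y‖ ≤ K * ‖x - y‖ ^ α

/-- `f` is globally α-Hölder with constant `K`. -/
def HolderR {X Y : Type*} [SeminormedAddGroup X] [SeminormedAddGroup Y]
    (K α : ℝ) (f : X → Y) : Prop :=
  ∀ x y, ‖f x - f y‖ ≤ K * ‖x - y‖ ^ α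

/-- The α-Hölder extension property with constant `l`: every α-Hölder map from a subset
of `X` into `Y` extends to `X` with Hölder constant multiplied by at most `l`. -/
def ExtProp (l α : ℝ) (X Y : Type*) [SeminormedAddGroup X] [SeminormedAddGroup Y] : Prop :=
  ∀ (M : Set X) (f : X → Y) (K : ℝ), 0 ≤ K → HolderOnR K α f M →
    ∃ F : X → Y, Set.EqOn F f M ∧ ∃ K' : ℝ, 0 ≤ K' ∧ HolderR K' α F ∧ K' ≤ l * K

/-- `λ_α(X, Y)`: the optimal α-Hölder extension constant from subsets of `X` into `Y`
(`∞` if no finite constant works). -/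
def holderExt (α : ℝ) (X Y : Type*) [SeminormedAddGroup X] [SeminormedAddGroup Y] : ℝ≥0∞ :=
  sInf {L : ℝ≥0∞ | ∃ l : ℝ, 0 ≤ l ∧ L = ENNReal.ofReal l ∧ ExtProp l α X Y}

/-!
Pass to a subsequence along which the norms converge to some `L`. A continuous lower bound
`f ‖x_k‖ ≤ ‖x_j - x_k‖` with `f L > κ L` then gives, on a tail, norms `≤ b` and mutual distances
`≥ r` with `r > κ b`; rescaling by `1 / b` produces a sequence in the unit ball that is
`r / b`-separated, contradicting the definition of `κ`. The hypothesis of the theorem is such a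
lower bound with `f t = (κ^α t^α + ε')^(1/α)`.
-/

open Topology

section Kottman

variable {X : Type*}

lemma le_kottman [SeminormedAddGroup X] {x : ℕ → X} {r : ℝ} (hx : ∀ n, ‖x n‖ ≤ 1)
    (hr : ∀ n m, n ≠ m → r ≤ ‖x n - x m‖) : r ≤ kottman X := by
  refine le_csSup ⟨2, ?_⟩ ⟨x, hx, hr⟩
  rintro s ⟨z, hz, hs⟩
  calc s ≤ ‖z 0 - z 1‖ := hs 0 1 zero_ne_one
    _ ≤ ‖z 0‖ + ‖z 1‖ := norm_sub_le _ _
    _ ≤ 2 := by linarith [hz 0, hz 1]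

lemma kottman_nonneg [SeminormedAddGroup X] : 0 ≤ kottman X :=
  le_kottman (x := fun _ => 0) (fun _ => by simp) fun _ _ _ => by simp

lemma le_kottman_mul [SeminormedAddCommGroup X] [NormedSpace ℝ X] {x : ℕ → X} {b r : ℝ}
    (hb : 0 < b) (hx : ∀ n, ‖x n‖ ≤ b) (hr : ∀ n m, n < m → r ≤ ‖x n - x m‖) :
    r ≤ kottman X * b := by
  have hnorm : ∀ v : X, ‖b⁻¹ • v‖ = ‖v‖ / b := fun v => by
    rw [norm_smul, norm_inv, Real.norm_of_nonneg hb.le, inv_mul_eq_div]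
  have hsep : ∀ n m, n ≠ m → r / b ≤ ‖b⁻¹ • x n - b⁻¹ • x m‖ := by
    intro n m hnm
    rw [← smul_sub, hnorm]
    rcases hnm.lt_or_gt with h | h
    · exact div_le_div_of_nonneg_right (hr n m h) hb.le
    · exact norm_sub_rev (x n) (x m) ▸ div_le_div_of_nonneg_right (hr m n h) hb.le
  have hball : ∀ n, ‖b⁻¹ • x n‖ ≤ 1 := fun n => by
    rw [hnorm, div_le_one hb]; exact hx n
  exact (div_le_iff₀ hb).1 (le_kottman hball hsep)

lemma exists_norm_sub_lt_of_kottman_mul_lt [NormedAddCommGroup X] [NormedSpace ℝ X]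
    {x : ℕ → X} (hx : ∀ n, ‖x n‖ ≤ 1) {f : ℝ → ℝ} (hf : Continuous f)
    (hκf : ∀ t ∈ Icc (0 : ℝ) 1, kottman X * t < f t) :
    ∃ j k, j < k ∧ ‖x j - x k‖ < f ‖x k‖ := by
  by_contra! hsep
  obtain ⟨L, hL, φ, hφ, hφL⟩ :=
    (isCompact_Icc (a := (0 : ℝ)) (b := 1)).tendsto_subseq (x := fun n => ‖x n‖)
      fun n => ⟨norm_nonneg _, hx n⟩
  have hκL := hκf L hL
  obtain ⟨b, hκb, hLb⟩ : ∃ b, kottman X * b < f L ∧ L < b :=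
    (((continuous_const.mul continuous_id).tendsto L).eventually_lt_const hκL
      |>.filter_mono nhdsWithin_le_nhds |>.and self_mem_nhdsWithin).exists (f := 𝓝[>] L)
  obtain ⟨r, hbr, hrL⟩ := exists_between hκb
  obtain ⟨N, hN⟩ := eventually_atTop.1 <|
    (hφL.eventually (gt_mem_nhds hLb)).and
      (((hf.tendsto L).comp hφL).eventually (lt_mem_nhds hrL))
  have hr : r ≤ kottman X * b := by
    refine le_kottman_mul (x := fun n => x (φ (N + n))) (hL.1.trans_lt hLb)
      (fun n => (hN (N + n) (Nat.le_add_right N _)).1.le) fun n m hnm => ?_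
    exact (hN (N + m) (Nat.le_add_right N _)).2.le.trans (hsep _ _ (hφ (by omega)))
  exact hr.not_gt hbr

end Kottman

theorem statement5_general (X : Type*) [NormedAddCommGroup X] [NormedSpace ℝ X]
    (α ε' : ℝ) (hα0 : 0 < α) (hε' : 0 < ε') :
    ¬ ∃ x : ℕ → X, (∀ n, ‖x n‖ ≤ 1) ∧
      ∀ j k, j < k → kottman X ^ α * ‖x k‖ ^ α + ε' < ‖x j - x k‖ ^ α := by
  rintro ⟨x, hx, hsep⟩
  set κ := kottman X
  have hκ : 0 ≤ κ := kottman_nonneg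
  have hbase : ∀ t, 0 ≤ t → 0 ≤ κ ^ α * t ^ α + ε' := fun t ht =>
    add_nonneg (mul_nonneg (Real.rpow_nonneg hκ _) (Real.rpow_nonneg ht _)) hε'.le
  have hf : Continuous fun t : ℝ => (κ ^ α * t ^ α + ε') ^ α⁻¹ :=
    ((continuous_const.mul (Real.continuous_rpow_const hα0.le)).add continuous_const).rpow_const
      fun _ => Or.inr (inv_nonneg.2 hα0.le)
  have hκf : ∀ t ∈ Icc (0 : ℝ) 1, κ * t < (κ ^ α * t ^ α + ε') ^ α⁻¹ := fun t ht => by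
    rw [Real.lt_rpow_inv_iff_of_pos (mul_nonneg hκ ht.1) (hbase t ht.1) hα0,
      Real.mul_rpow hκ ht.1]
    linarith
  obtain ⟨j, k, hjk, hlt⟩ := exists_norm_sub_lt_of_kottman_mul_lt hx hf hκf
  rw [Real.lt_rpow_inv_iff_of_pos (norm_nonneg _) (hbase _ (norm_nonneg _)) hα0] at hlt
  exact (hsep j k hjk).not_gt hlt

/-- Let `X` be an infinite-dimensional Banach space with Kottman constant `κ`, `α ∈ (0,1]`
and `ε' > 0`. Then there is no sequence `(x'ₙ)` in the closed unit ball of `X` with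
`κ^α ‖x'_k‖^α + ε' < ‖x'_j - x'_k‖^α` for all `j < k`. -/
theorem statement5 (X : Type*) [NormedAddCommGroup X] [NormedSpace ℝ X] [CompleteSpace X]
    (hX : ¬ FiniteDimensional ℝ X) (α ε' : ℝ) (hα0 : 0 < α) (hα1 : α ≤ 1) (hε' : 0 < ε') :
    ¬ ∃ x : ℕ → X, (∀ n, ‖x n‖ ≤ 1) ∧
      ∀ j k, j < k → kottman X ^ α * ‖x k‖ ^ α + ε' < ‖x j - x k‖ ^ α :=
  statement5_general X α ε' hα0 hε'
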